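/- Let x, u be elements of an algebraic closure of F_5 with x nonzero, and suppose u = x^2 and 2·x^5·(2x^9 - 2x) = 2u^9 - 2u. Then x^4 = 1 or x^4 = -1. -/
import Mathlib


instance : Fact (Nat.Prime 5) := ⟨by norm_num⟩

theorem stmt_19 (x u : AlgebraicClosure (ZMod 5)) (hx : x ≠ 0) (hu : u = x ^ 2)
    (h : 2 * x ^ 5 * (2 * x ^ 9 - 2 * x) = 2 * u ^ 9 - 2 * u) :
    x ^ 4 = 1 ∨ x ^ 4 = -1 := by
  subst hu
  have h2 : (2 : AlgebraicClosure (ZMod 5)) ≠ 0 := by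
    have : algebraMap (ZMod 5) (AlgebraicClosure (ZMod 5)) 2 ≠ 0 := by
      rw [map_ne_zero]; decide
    rwa [map_ofNat] at this
  have key : 2 * x ^ 2 * ((x ^ 4 - 1) ^ 3 * (x ^ 4 + 1)) = 0 := by linear_combination -h
  have hx2 : (2 : AlgebraicClosure (ZMod 5)) * x ^ 2 ≠ 0 := mul_ne_zero h2 (pow_ne_zero _ hx)
  rcases mul_eq_zero.mp key with H | H
  · exact absurd H hx2
  rcases mul_eq_zero.mp H with H | H
  · left
    have := pow_eq_zero_iff (n := 3) (by norm_num) |>.mp H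
    exact sub_eq_zero.mp this
  · right
    exact eq_neg_of_add_eq_zero_left H
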